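/- arXiv:math/0008201 — 2 statements merged into one kernel-verified Lean document; each statement's English description precedes it below -/
import Mathlib

section
/- Let γ be a contour in Λ(l) which is non-crossing. Then |γ \ ∂Q(Λ(l))| ≥ (1/2)|γ| + (1/2)|γ \ (∂Q(Λ(l)) ∪ γ̲)|, where γ̲ is the distinguished connected component of γ \ ∂Q(Λ(l)) separating Θ(γ) from the two untouched sides of the square. -/
open Finset

/-! ### Basic lattice notions for the 2-D Ising model on the square Λ(l) -/

abbrev Site := ℤ × ℤ

/-- `l¹`-distance on `ℤ²`. -/
def d1 (x y : Site) : ℤ := |x.1 - y.1| + |x.2 - y.2|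

/-- `l∞`-distance on `ℤ²`. -/
def dinf (x y : Site) : ℤ := max |x.1 - y.1| |x.2 - y.2|

/-- There is a path from `x` to `y` inside `S` with steps of `d`-distance 1. -/
def ChainIn (d : Site → Site → ℤ) (S : Set Site) (x y : Site) : Prop :=
  ∃ L : List Site, L.Chain' (fun a b => d a b = 1) ∧ L.head? = some x ∧
    L.getLast? = some y ∧ ∀ a ∈ L, a ∈ S

/-- `S` is connected with respect to steps of `d`-distance 1. -/
def ConnIn (d : Site → Site → ℤ) (S : Set Site) : Prop :=
  ∀ x ∈ S, ∀ y ∈ S, ChainIn d S x y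

def lamLo (l : ℕ) : ℤ := 1 - (((l + 1) / 2 : ℕ) : ℤ)
def lamHi (l : ℕ) : ℤ := ((l / 2 : ℕ) : ℤ)

/-- The lamBox the box. -/
noncomputable def lamBox (l : ℕ) : Finset Site := Finset.Icc (lamLo l, lamLo l) (lamHi l, lamHi l)

/-- The exterior boundary `∂_ex Λ(l)`. -/
def extBdry (l : ℕ) : Set Site := {y | y ∉ lamBox l ∧ ∃ x ∈ lamBox l, d1 x y = 1}

/-- An interval of `∂_ex Λ(l)` : an `l∞`-connected subset of it. -/
def IsBdryInterval (l : ℕ) (I : Finset Site) : Prop :=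
  (↑I : Set Site) ⊆ extBdry l ∧ ConnIn dinf ↑I

/-- The four nearest neighbours of a site. -/
def nbrs (x : Site) : Finset Site :=
  {(x.1 + 1, x.2), (x.1 - 1, x.2), (x.1, x.2 + 1), (x.1, x.2 - 1)}

/-- A dual bond, recorded by its two endpoints `v`, a dual vertex `v` standing for the
point `v + (1/2, 1/2)` of the dual lattice. -/
abbrev DBond := Sym2 Site

/-- The dual bond of the nearest-neighbour bond `{x, y}`. -/
def dualBond (x y : Site) : DBond :=
  if x.2 = y.2 then s((min x.1 y.1, x.2 - 1), (min x.1 y.1, x.2))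
  else s((x.1 - 1, min x.2 y.2), (x.1, min x.2 y.2))

/-- `∂Q(Θ)` : the set of dual bonds separating `Θ` from its complement. -/
def contourOf (Θ : Finset Site) : Finset DBond :=
  Θ.biUnion fun x => ((nbrs x).filter (· ∉ Θ)).image fun y => dualBond x y

/-- `Θ` and its complement are `l¹`-connected, so that `∂Q(Θ)` is a contour. -/
def IsContourRegion (Θ : Finset Site) : Prop :=
  ConnIn d1 ↑Θ ∧ ConnIn d1 ((↑Θ : Set Site)ᶜ)

/-- `∂Q(Λ(l))`, as a set of dual bonds. -/
noncomputable def boxBdry (l : ℕ) : Finset DBond := contourOf (lamBox l)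

/-- The dual vertex `v` lies on the side `F_l^j` of `Q(Λ(l))` (`j ∈ {1,-1,2,-2}` for
right, left, top, bottom). -/
def onSide (l : ℕ) (j : ℤ) (v : Site) : Prop :=
  (j = 1 ∧ v.1 = lamHi l ∧ lamLo l - 1 ≤ v.2 ∧ v.2 ≤ lamHi l) ∨
  (j = -1 ∧ v.1 = lamLo l - 1 ∧ lamLo l - 1 ≤ v.2 ∧ v.2 ≤ lamHi l) ∨
  (j = 2 ∧ v.2 = lamHi l ∧ lamLo l - 1 ≤ v.1 ∧ v.1 ≤ lamHi l) ∨
  (j = -2 ∧ v.2 = lamLo l - 1 ∧ lamLo l - 1 ≤ v.1 ∧ v.1 ≤ lamHi l)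

/-- The set of dual bonds `γ` meets the side `F_l^j`. -/
def touches (l : ℕ) (j : ℤ) (γ : Finset DBond) : Prop :=
  ∃ e ∈ γ, ∃ v : Site, v ∈ e ∧ onSide l j v

def HorizCrossing (l : ℕ) (γ : Finset DBond) : Prop := touches l 1 γ ∧ touches l (-1) γ
def VertCrossing (l : ℕ) (γ : Finset DBond) : Prop := touches l 2 γ ∧ touches l (-2) γ

/-- `γ` is neither horizontally nor vertically crossing. -/
def NonCrossing (l : ℕ) (γ : Finset DBond) : Prop :=
  ¬ (HorizCrossing l γ ∨ VertCrossing l γ)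

/-- Two dual bonds are adjacent if they share a dual vertex. -/
def DAdj (a b : DBond) : Prop := ∃ v : Site, v ∈ a ∧ v ∈ b

/-- A set of dual bonds is connected (via shared dual vertices). -/
def DConn (S : Finset DBond) : Prop :=
  ∀ e ∈ S, ∀ f ∈ S, ∃ L : List DBond, L.Chain' DAdj ∧ L.head? = some e ∧
    L.getLast? = some f ∧ ∀ a ∈ L, a ∈ S

/-- Dual bonds separating `Θt` from `Λ(l) \ Θt` inside the lamBox. -/
noncomputable def interiorBdry (l : ℕ) (Θt : Finset Site) : Finset DBond :=
  Θt.biUnion fun x => ((nbrs x).filter fun y => y ∈ lamBox l ∧ y ∉ Θt).image fun y => dualBond x y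

/-- The sites of `Λ(l)` along the side `F_l^j`. -/
def sideSites (l : ℕ) (j : ℤ) (x : Site) : Prop :=
  x ∈ lamBox l ∧ ((j = 1 ∧ x.1 = lamHi l) ∨ (j = -1 ∧ x.1 = lamLo l) ∨
    (j = 2 ∧ x.2 = lamHi l) ∨ (j = -2 ∧ x.2 = lamLo l))

/-- The data of the distinguished connected component `γ̲ = γu` of `γ \ ∂Q(Λ(l))` and of the
region `Θ̃ = Θt` into which a non-crossing contour `γ = ∂Q(Θ)` divides the lamBox: `γu` is a
connected component of `γ \ ∂Q(Λ(l))` dividing `Λ(l)` into the `l¹`-connected pieces `Θt` and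
`Λ(l) \ Θt`, with `Θ ⊆ Θt` and `F_l^i ∪ F_l^j ⊆ ∂Q(Λ(l) \ Θt)` for untouched sides `i, j`. -/
def UnderlineData (l : ℕ) (Θ : Finset Site) (γu : Finset DBond) (Θt : Finset Site) : Prop :=
  γu ⊆ contourOf Θ \ boxBdry l ∧ DConn γu ∧
  (∀ e ∈ contourOf Θ \ boxBdry l, e ∉ γu → ∀ f ∈ γu, ¬ DAdj e f) ∧
  Θ ⊆ Θt ∧ Θt ⊆ lamBox l ∧ ConnIn d1 ↑Θt ∧ ConnIn d1 ↑(lamBox l \ Θt) ∧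
  interiorBdry l Θt = γu ∧
  ∃ i j : ℤ, (i = 1 ∨ i = -1) ∧ (j = 2 ∨ j = -2) ∧
    ¬ touches l i (contourOf Θ) ∧ ¬ touches l j (contourOf Θ) ∧
    (∀ x, sideSites l i x → x ∉ Θt) ∧ (∀ x, sideSites l j x → x ∉ Θt)

/-- `γ̄ = ∂Q(Λ(l)) ∩ ∂Q(Θ̃)`. -/
noncomputable def gammaBar (l : ℕ) (Θt : Finset Site) : Finset DBond := boxBdry l ∩ contourOf Θt

/-- `V_ex(γ)` : sites of the exterior boundary attached to dual bonds of `γ`. -/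
noncomputable def Vex (l : ℕ) (γ : Finset DBond) : Finset Site :=
  (lamBox l).biUnion fun x => (nbrs x).filter fun y => y ∉ lamBox l ∧ dualBond x y ∈ γ

/-- `T_Θ` : flip the spins in `Θ`. -/
def flipC (Θ : Finset Site) (σ : Site → ℤ) : Site → ℤ :=
  fun x => if x ∈ Θ then -σ x else σ x

/-- The Ising Hamiltonian `H^ω_{Λ(l)}(σ)` with boundary condition `ω`. -/
noncomputable def Ham (l : ℕ) (ω : Site → ℝ) (σ : Site → ℤ) : ℝ :=
  -(1/2) * ∑ x ∈ lamBox l, ∑ y ∈ (nbrs x).filter (· ∈ lamBox l), ((σ x * σ y : ℤ) : ℝ)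
    - ∑ x ∈ lamBox l, ∑ y ∈ (nbrs x).filter (· ∉ lamBox l), (σ x : ℝ) * ω y

/-- `Δ_{γ₁,…,γ_p} H^ω_{Λ(l)}(σ) = H(σ) - H(T_{γ₁}∘⋯∘T_{γ_p} σ)`, the contours being
recorded by their regions `Θ(γ_j)`. -/
noncomputable def dH (l : ℕ) (ω : Site → ℝ) (Θs : List (Finset Site)) (σ : Site → ℤ) : ℝ :=
  Ham l ω σ - Ham l ω (Θs.foldr flipC σ)

/-- `C` is an (ε)-cluster in `Λ(l)` at `σ` : a maximal `l¹`-connected component of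
`{x ∈ Λ(l) : σ_x = ε}`. -/
def IsCluster (l : ℕ) (σ : Site → ℤ) (ε : ℤ) (C : Finset Site) : Prop :=
  C.Nonempty ∧ (∀ x ∈ C, x ∈ lamBox l ∧ σ x = ε) ∧ ConnIn d1 ↑C ∧
  ∀ y ∈ lamBox l, σ y = ε → (∃ x ∈ C, d1 x y = 1) → y ∈ C

/-- The `l¹`-connected component of `x` within `S`. -/
def l1Comp (S : Set Site) (x : Site) : Set Site := {y | ChainIn d1 S x y}

/-- `C` together with the bounded components of its complement; `∂Q(fill C)` is the outer
boundary of `Q(C)`. -/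
def fill (C : Finset Site) : Set Site :=
  ↑C ∪ {x | (l1Comp ((↑C : Set Site)ᶜ) x).Finite}

/-- `Θ` is the region `Θ(γ)` of an (ε)-contour `γ` in `Λ(l)` at `σ`. -/
def IsEContour (l : ℕ) (σ : Site → ℤ) (ε : ℤ) (Θ : Finset Site) : Prop :=
  ∃ C : Finset Site, IsCluster l σ ε C ∧ (↑Θ : Set Site) = fill C

/-- A dual bond is horizontal. -/
def isHorizD (e : DBond) : Prop := ∃ v w : Site, e = s(v, w) ∧ v.2 = w.2

/-- A dual bond is vertical. -/
def isVertD (e : DBond) : Prop := ∃ v w : Site, e = s(v, w) ∧ v.1 = w.1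

open Classical in
/-- The number of horizontal dual bonds in `γ`. -/
noncomputable def horizCount (γ : Finset DBond) : ℕ := (γ.filter isHorizD).card

open Classical in
/-- The number of vertical dual bonds in `γ`. -/
noncomputable def vertCount (γ : Finset DBond) : ℕ := (γ.filter isVertD).card

/-! ### Glauber dynamics -/

/-- Configurations on a finite `Λ ⊂ ℤ²` (`true` = spin `+1`, `false` = spin `-1`). -/
abbrev Cfg (Λ : Finset Site) := ↥Λ → Bool

/-- The spin value of a Boolean. -/
def spinVal (b : Bool) : ℝ := if b then 1 else -1

/-- The Ising Hamiltonian on a general finite `Λ`. -/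
noncomputable def HamG (Λ : Finset Site) (ω : Site → ℝ) (σ : Cfg Λ) : ℝ :=
  -(1/2) * ∑ x : ↥Λ, ∑ y : ↥Λ, (if d1 ↑x ↑y = 1 then spinVal (σ x) * spinVal (σ y) else 0)
    - ∑ x : ↥Λ, ∑ y ∈ (nbrs ↑x).filter (· ∉ Λ), spinVal (σ x) * ω y

/-- The finite-volume Gibbs measure `μ^ω_Λ` at inverse temperature `β`. -/
noncomputable def gibbs (Λ : Finset Site) (ω : Site → ℝ) (β : ℝ) (σ : Cfg Λ) : ℝ :=
  Real.exp (-β * HamG Λ ω σ) / ∑ τ : Cfg Λ, Real.exp (-β * HamG Λ ω τ)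

/-- The mean of `f` under the weights `μ`. -/
noncomputable def meanW (Λ : Finset Site) (μ f : Cfg Λ → ℝ) : ℝ := ∑ σ : Cfg Λ, μ σ * f σ

/-- `σ^x` : flip the spin at `x`. -/
def flipAt (Λ : Finset Site) (σ : Cfg Λ) (x : ↥Λ) : Cfg Λ := Function.update σ x (!(σ x))

/-- The generator `A^ω_Λ` of the stochastic Ising model with flip rates `q`. -/
noncomputable def genA (Λ : Finset Site) (q : ↥Λ → Cfg Λ → ℝ) (f : Cfg Λ → ℝ) (σ : Cfg Λ) : ℝ :=
  ∑ x : ↥Λ, q x σ * (f (flipAt Λ σ x) - f σ)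

/-- The variance `μ(|f - μf|²)`. -/
noncomputable def varW (Λ : Finset Site) (μ f : Cfg Λ → ℝ) : ℝ :=
  meanW Λ μ (fun σ => |f σ - meanW Λ μ f| ^ 2)

/-- The spectral gap `gap(Λ, ω, β)` : the infimum of the Rayleigh quotients
`-μ(f A f) / μ(|f - μf|²)`. -/
noncomputable def specGap (Λ : Finset Site) (ω : Site → ℝ) (β : ℝ)
    (q : ↥Λ → Cfg Λ → ℝ) : ℝ :=
  sInf { r | ∃ f : Cfg Λ → ℝ, varW Λ (gibbs Λ ω β) f ≠ 0 ∧
    r = (- meanW Λ (gibbs Λ ω β) fun σ => f σ * genA Λ q f σ) / varW Λ (gibbs Λ ω β) f }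

/-- The `±1`-spin function of a configuration on `Λ(l)` (`0` outside the lamBox). -/
noncomputable def toSpin (l : ℕ) (σ : Cfg (lamBox l)) : Site → ℤ :=
  fun x => if h : x ∈ lamBox l then (if σ ⟨x, h⟩ then 1 else -1) else 0

/-- The magnetization at the origin, `μ^ω_{Λ(l)}(σ₀)`. -/
noncomputable def magZero (l : ℕ) (ω : Site → ℝ) (β : ℝ) : ℝ :=
  ∑ σ : Cfg (lamBox l), gibbs (lamBox l) ω β σ * ((toSpin l σ (0, 0) : ℤ) : ℝ)

/-- The favoured sign `ε_{l,ω}`. -/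
noncomputable def epsSign (l : ℕ) (ω : Site → ℝ) (β : ℝ) : ℤ :=
  if 0 ≤ magZero l ω β then 1 else -1

/-- The trap event `Γ_l` : some (ε)-contour `γ` at `σ` meets `∂Q(Λ(l))` and has
`|γ| ≥ 2δ₁ l`. -/
def GammaEvent (l : ℕ) (δ₁ : ℝ) (ε : ℤ) : Set (Cfg (lamBox l)) :=
  {σ | ∃ Θ : Finset Site, IsEContour l (toSpin l σ) ε Θ ∧
    (contourOf Θ ∩ boxBdry l).Nonempty ∧ 2 * δ₁ * l ≤ ((contourOf Θ).card : ℝ)}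

open Classical in
/-- The Gibbs probability of an event `S ⊂ Ω_{Λ(l)}`. -/
noncomputable def probOf (l : ℕ) (ω : Site → ℝ) (β : ℝ) (S : Set (Cfg (lamBox l))) : ℝ :=
  ∑ σ ∈ Finset.univ.filter (· ∈ S), gibbs (lamBox l) ω β σ

/-- Union of the contours of a list of regions. -/
def unionB (L : List (Finset Site)) : Finset DBond :=
  L.foldr (fun Θ s => contourOf Θ ∪ s) ∅

/-- Union of a list of regions. -/
def unionR (L : List (Finset Site)) : Finset Site :=
  L.foldr (· ∪ ·) ∅

/-!
Since `γ̲ ⊆ γ \ ∂Q(Λ(l))`, the inequality amounts to `|γ ∩ ∂Q(Λ(l))| ≤ |γ̲|`, and `γ̲` is the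
part of `∂Q(Θ̃)` inside the box. Map every dual bond to the row or column of `ℤ²` it crosses.
On `γ ∩ ∂Q(Λ(l))` this map is injective: such a bond avoids the sides `F_l^i`, `F_l^j`, so it
lies on one of the two opposite sides, where a line is crossed only once. Its image lies in the
image of `γ̲`: a line crossed by `γ` passes through `Θ ⊆ Θ̃` and runs on to `F_l^i` or `F_l^j`,
which lie outside `Θ̃`, so in between it leaves `Θ̃` through a bond of `γ̲`.
-/

lemma mem_lamBox {l : ℕ} {x : Site} :
    x ∈ lamBox l ↔ lamLo l ≤ x.1 ∧ x.1 ≤ lamHi l ∧ lamLo l ≤ x.2 ∧ x.2 ≤ lamHi l := by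
  simp only [lamBox, Finset.mem_Icc, Prod.le_def]
  tauto

lemma mem_nbrs {x y : Site} :
    y ∈ nbrs x ↔
      y = (x.1 + 1, x.2) ∨ y = (x.1 - 1, x.2) ∨ y = (x.1, x.2 + 1) ∨ y = (x.1, x.2 - 1) := by
  simp [nbrs]

lemma mem_nbrs_comm {x y : Site} (hy : y ∈ nbrs x) : x ∈ nbrs y := by
  rw [mem_nbrs] at hy ⊢
  rcases hy with rfl | rfl | rfl | rfl <;> simp

lemma mem_contourOf {Θ : Finset Site} {e : DBond} :
    e ∈ contourOf Θ ↔ ∃ x ∈ Θ, ∃ y ∈ nbrs x, y ∉ Θ ∧ dualBond x y = e := by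
  simp only [contourOf, mem_biUnion, mem_image, mem_filter]
  tauto

lemma dualBond_mem_interiorBdry {l : ℕ} {Θt : Finset Site} {x y : Site} (hx : x ∈ Θt)
    (hy : y ∈ nbrs x) (hyΛ : y ∈ lamBox l) (hyΘt : y ∉ Θt) :
    dualBond x y ∈ interiorBdry l Θt :=
  mem_biUnion.2 ⟨x, hx, mem_image.2 ⟨y, mem_filter.2 ⟨hy, hyΛ, hyΘt⟩, rfl⟩⟩

lemma Int.exists_le_lt_of_not {P : ℤ → Prop} {a b : ℤ} (hab : a ≤ b) (ha : P a) (hb : ¬ P b) :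
    ∃ t, a ≤ t ∧ t < b ∧ P t ∧ ¬ P (t + 1) := by
  induction b, hab using Int.leInduction with
  | base => exact absurd ha hb
  | succ n han ih =>
    by_cases hn : P n
    · exact ⟨n, han, by omega, hn, hb⟩
    · obtain ⟨t, hat, htn, ht, ht'⟩ := ih hn
      exact ⟨t, hat, by omega, ht, ht'⟩

lemma Int.exists_min_le_lt_max_not_iff {P : ℤ → Prop} {a b : ℤ} (ha : P a) (hb : ¬ P b) :
    ∃ t, min a b ≤ t ∧ t < max a b ∧ ¬ (P t ↔ P (t + 1)) := by
  rcases le_total a b with hab | hba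
  · obtain ⟨t, hat, htb, ht, ht'⟩ := Int.exists_le_lt_of_not hab ha hb
    exact ⟨t, by omega, by omega, by tauto⟩
  · obtain ⟨t, hbt, hta, ht, ht'⟩ :=
      Int.exists_le_lt_of_not (P := fun t => ¬ P t) hba hb (not_not.2 ha)
    exact ⟨t, by omega, by omega, by tauto⟩

/-- The lattice line crossed by a dual bond: `.inl r` for the row `r`, `.inr c` for the
column `c`. -/
def crossedLine : DBond → ℤ ⊕ ℤ :=
  Sym2.lift ⟨fun v w => if v.1 = w.1 then .inl (max v.2 w.2) else .inr (max v.1 w.1), by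
    intro v w
    by_cases h : v.1 = w.1
    · simp only [h, if_true, max_comm]
    · simp only [h, Ne.symm h, if_false, max_comm]⟩

lemma crossedLine_dualBond {x y : Site} (hy : y ∈ nbrs x) :
    crossedLine (dualBond x y) = if x.2 = y.2 then .inl x.2 else .inr x.1 := by
  obtain ⟨a, b⟩ := x
  rw [mem_nbrs] at hy
  rcases hy with rfl | rfl | rfl | rfl <;> simp [dualBond, crossedLine, eq_sub_iff_add_eq]

lemma crossedLine_dualBond_comm {x y : Site} (hy : y ∈ nbrs x) :
    crossedLine (dualBond y x) = crossedLine (dualBond x y) := by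
  rw [crossedLine_dualBond hy, crossedLine_dualBond (mem_nbrs_comm hy)]
  rw [mem_nbrs] at hy
  rcases hy with rfl | rfl | rfl | rfl <;> simp [eq_sub_iff_add_eq]

lemma boxBdry_eq_of_crossedLine_eq_inl {l : ℕ} {e : DBond} {r : ℤ} (he : e ∈ boxBdry l)
    (hline : crossedLine e = .inl r) :
    ∃ m, (m = lamHi l ∨ m = lamLo l - 1) ∧ lamLo l ≤ r ∧ r ≤ lamHi l ∧
      e = s((m, r - 1), (m, r)) := by
  obtain ⟨⟨a, b⟩, hx, y, hy, hyΛ, rfl⟩ := mem_contourOf.1 he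
  rw [crossedLine_dualBond hy] at hline
  split_ifs at hline with hrow
  obtain rfl := Sum.inl_injective hline
  refine ⟨min a y.1, ?_, ?_, ?_, by rw [dualBond, if_pos hrow]⟩ <;>
  · rw [mem_lamBox] at hx hyΛ
    rw [mem_nbrs] at hy
    rcases hy with rfl | rfl | rfl | rfl <;> simp only [min_self] at hrow hyΛ hx ⊢ <;> omega

lemma boxBdry_eq_of_crossedLine_eq_inr {l : ℕ} {e : DBond} {c : ℤ} (he : e ∈ boxBdry l)
    (hline : crossedLine e = .inr c) :
    ∃ m, (m = lamHi l ∨ m = lamLo l - 1) ∧ lamLo l ≤ c ∧ c ≤ lamHi l ∧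
      e = s((c - 1, m), (c, m)) := by
  obtain ⟨⟨a, b⟩, hx, y, hy, hyΛ, rfl⟩ := mem_contourOf.1 he
  rw [crossedLine_dualBond hy] at hline
  split_ifs at hline with hrow
  obtain rfl := Sum.inr_injective hline
  refine ⟨min b y.2, ?_, ?_, ?_, by rw [dualBond, if_neg hrow]⟩ <;>
  · rw [mem_lamBox] at hx hyΛ
    rw [mem_nbrs] at hy
    rcases hy with rfl | rfl | rfl | rfl <;>
      simp only [not_true_eq_false] at hrow hyΛ hx ⊢ <;> omega

lemma crossedLine_injOn_boxBdry {l : ℕ} {i j : ℤ} (hi : i = 1 ∨ i = -1) (hj : j = 2 ∨ j = -2) :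
    Set.InjOn crossedLine {e | e ∈ boxBdry l ∧ ∀ v ∈ e, ¬ onSide l i v ∧ ¬ onSide l j v} := by
  rintro e ⟨he, hside⟩ e' ⟨he', hside'⟩ hline
  cases hk : crossedLine e with
  | inl r =>
    obtain ⟨m, hm, hr, hr', rfl⟩ := boxBdry_eq_of_crossedLine_eq_inl he hk
    obtain ⟨m', hm', -, -, rfl⟩ := boxBdry_eq_of_crossedLine_eq_inl he' (hline.symm.trans hk)
    have h := (hside _ (Sym2.mem_mk_right _ _)).1
    have h' := (hside' _ (Sym2.mem_mk_right _ _)).1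
    obtain rfl : m = m' := by
      rcases hi with rfl | rfl <;>
        simp only [onSide, Int.reduceNeg, reduceCtorEq, neg_inj, OfNat.one_ne_ofNat, false_and,
          true_and, false_or, or_false] at h h' <;>
        omega
    rfl
  | inr c =>
    obtain ⟨m, hm, hc, hc', rfl⟩ := boxBdry_eq_of_crossedLine_eq_inr he hk
    obtain ⟨m', hm', -, -, rfl⟩ := boxBdry_eq_of_crossedLine_eq_inr he' (hline.symm.trans hk)
    have h := (hside _ (Sym2.mem_mk_right _ _)).2
    have h' := (hside' _ (Sym2.mem_mk_right _ _)).2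
    obtain rfl : m = m' := by
      rcases hj with rfl | rfl <;>
        simp only [onSide, Int.reduceNeg, reduceCtorEq, neg_inj, OfNat.ofNat_ne_one, false_and,
          true_and, false_or, or_false] at h h' <;>
        omega
    rfl

lemma crossedLine_mem_image_interiorBdry {l : ℕ} {Θt : Finset Site} {x y : Site}
    (hy : y ∈ nbrs x) (hxΛ : x ∈ lamBox l) (hyΛ : y ∈ lamBox l) (hxy : ¬ (x ∈ Θt ↔ y ∈ Θt)) :
    crossedLine (dualBond x y) ∈ (interiorBdry l Θt).image crossedLine := by
  by_cases hx : x ∈ Θt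
  · exact mem_image_of_mem _ (dualBond_mem_interiorBdry hx hy hyΛ (by tauto))
  · rw [← crossedLine_dualBond_comm hy]
    exact mem_image_of_mem _ (dualBond_mem_interiorBdry (by tauto) (mem_nbrs_comm hy) hxΛ hx)

lemma inl_mem_image_crossedLine_interiorBdry {l : ℕ} {Θt : Finset Site} {x z : Site}
    (hxz : x.2 = z.2) (hx : x ∈ Θt) (hz : z ∉ Θt) (hxΛ : x ∈ lamBox l) (hzΛ : z ∈ lamBox l) :
    .inl x.2 ∈ (interiorBdry l Θt).image crossedLine := by
  obtain ⟨t, hxt, htz, hflip⟩ :=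
    Int.exists_min_le_lt_max_not_iff (P := fun t => (t, x.2) ∈ Θt) hx (by rwa [hxz])
  rw [mem_lamBox] at hxΛ hzΛ
  have hline := crossedLine_mem_image_interiorBdry (l := l) (Θt := Θt)
    (x := (t, x.2)) (y := (t + 1, x.2))
    (by simp [nbrs]) (mem_lamBox.2 (by omega)) (mem_lamBox.2 (by omega)) hflip
  rwa [crossedLine_dualBond (by simp [nbrs]), if_pos rfl] at hline

lemma inr_mem_image_crossedLine_interiorBdry {l : ℕ} {Θt : Finset Site} {x z : Site}
    (hxz : x.1 = z.1) (hx : x ∈ Θt) (hz : z ∉ Θt) (hxΛ : x ∈ lamBox l) (hzΛ : z ∈ lamBox l) :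
    .inr x.1 ∈ (interiorBdry l Θt).image crossedLine := by
  obtain ⟨t, hxt, htz, hflip⟩ :=
    Int.exists_min_le_lt_max_not_iff (P := fun t => (x.1, t) ∈ Θt) hx (by rwa [hxz])
  rw [mem_lamBox] at hxΛ hzΛ
  have hline := crossedLine_mem_image_interiorBdry (l := l) (Θt := Θt)
    (x := (x.1, t)) (y := (x.1, t + 1))
    (by simp [nbrs]) (mem_lamBox.2 (by omega)) (mem_lamBox.2 (by omega)) hflip
  rwa [crossedLine_dualBond (by simp [nbrs]), if_neg (by simp)] at hline

lemma exists_sideSites_row {l : ℕ} {i r : ℤ} (hi : i = 1 ∨ i = -1) (hr : lamLo l ≤ r)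
    (hr' : r ≤ lamHi l) : ∃ a, sideSites l i (a, r) := by
  rcases hi with rfl | rfl
  · exact ⟨lamHi l, mem_lamBox.2 ⟨by omega, le_rfl, hr, hr'⟩, by simp⟩
  · exact ⟨lamLo l, mem_lamBox.2 ⟨le_rfl, by omega, hr, hr'⟩, by simp⟩

lemma exists_sideSites_col {l : ℕ} {j c : ℤ} (hj : j = 2 ∨ j = -2) (hc : lamLo l ≤ c)
    (hc' : c ≤ lamHi l) : ∃ b, sideSites l j (c, b) := by
  rcases hj with rfl | rfl
  · exact ⟨lamHi l, mem_lamBox.2 ⟨hc, hc', by omega, le_rfl⟩, by simp⟩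
  · exact ⟨lamLo l, mem_lamBox.2 ⟨hc, hc', le_rfl, by omega⟩, by simp⟩

lemma crossedLine_mem_image_interiorBdry_of_mem {l : ℕ} {Θt : Finset Site} {i j : ℤ}
    (hΘt : Θt ⊆ lamBox l) (hi : i = 1 ∨ i = -1) (hj : j = 2 ∨ j = -2)
    (hsi : ∀ x, sideSites l i x → x ∉ Θt) (hsj : ∀ x, sideSites l j x → x ∉ Θt)
    {x y : Site} (hx : x ∈ Θt) (hy : y ∈ nbrs x) :
    crossedLine (dualBond x y) ∈ (interiorBdry l Θt).image crossedLine := by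
  have hxΛ := mem_lamBox.1 (hΘt hx)
  rw [crossedLine_dualBond hy]
  split_ifs
  · obtain ⟨a, ha⟩ := exists_sideSites_row hi hxΛ.2.2.1 hxΛ.2.2.2
    exact inl_mem_image_crossedLine_interiorBdry (z := (a, x.2)) rfl hx (hsi _ ha) (hΘt hx)
      ha.1
  · obtain ⟨b, hb⟩ := exists_sideSites_col hj hxΛ.1 hxΛ.2.1
    exact inr_mem_image_crossedLine_interiorBdry (z := (x.1, b)) rfl hx (hsj _ hb) (hΘt hx)
      hb.1

lemma card_contourOf_inter_boxBdry_le {l : ℕ} {Θ Θt : Finset Site} {i j : ℤ}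
    (hΘ : Θ ⊆ Θt) (hΘt : Θt ⊆ lamBox l) (hi : i = 1 ∨ i = -1) (hj : j = 2 ∨ j = -2)
    (hti : ¬ touches l i (contourOf Θ)) (htj : ¬ touches l j (contourOf Θ))
    (hsi : ∀ x, sideSites l i x → x ∉ Θt) (hsj : ∀ x, sideSites l j x → x ∉ Θt) :
    (contourOf Θ ∩ boxBdry l).card ≤ (interiorBdry l Θt).card := by
  have hinj : Set.InjOn crossedLine ↑(contourOf Θ ∩ boxBdry l) := by
    refine (crossedLine_injOn_boxBdry (l := l) hi hj).mono fun e he => ?_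
    obtain ⟨heγ, heB⟩ := mem_inter.1 he
    exact ⟨heB, fun v hv => ⟨fun h => hti ⟨e, heγ, v, hv, h⟩, fun h => htj ⟨e, heγ, v, hv, h⟩⟩⟩
  have himage : (contourOf Θ ∩ boxBdry l).image crossedLine ⊆
      (interiorBdry l Θt).image crossedLine := by
    intro k hk
    obtain ⟨e, he, rfl⟩ := mem_image.1 hk
    obtain ⟨x, hx, y, hy, -, rfl⟩ := mem_contourOf.1 (mem_inter.1 he).1
    exact crossedLine_mem_image_interiorBdry_of_mem hΘt hi hj hsi hsj (hΘ hx) hy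
  calc (contourOf Θ ∩ boxBdry l).card
      = ((contourOf Θ ∩ boxBdry l).image crossedLine).card := (card_image_of_injOn hinj).symm
    _ ≤ ((interiorBdry l Θt).image crossedLine).card := card_le_card himage
    _ ≤ (interiorBdry l Θt).card := card_image_le

theorem stmt3_general (l : ℕ) (Θ : Finset Site) (γu : Finset DBond) (Θt : Finset Site)
    (hu : UnderlineData l Θ γu Θt) :
    (contourOf Θ).card + (contourOf Θ \ (boxBdry l ∪ γu)).card ≤
      2 * (contourOf Θ \ boxBdry l).card := by
  obtain ⟨hγu, -, -, hΘ, hΘt, -, -, rfl, i, j, hi, hj, hti, htj, hsi, hsj⟩ := hu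
  have hbar := card_contourOf_inter_boxBdry_le hΘ hΘt hi hj hti htj hsi hsj
  have hsplit := card_sdiff_add_card_inter (contourOf Θ) (boxBdry l)
  rw [sdiff_union_distrib, ← Finset.sdiff_sdiff_left', card_sdiff_of_subset hγu]
  have := card_le_card hγu
  omega

/-- For a non-crossing contour `γ = ∂Q(Θ)` in `Λ(l)` with distinguished
component `γ̲ = γu`: `|γ \ ∂Q(Λ(l))| ≥ (1/2)|γ| + (1/2)|γ \ (∂Q(Λ(l)) ∪ γ̲)|`. -/
theorem stmt3 (l : ℕ) (Θ : Finset Site) (hΘ : IsContourRegion Θ) (hin : Θ ⊆ lamBox l)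
    (hnc : NonCrossing l (contourOf Θ)) (γu : Finset DBond) (Θt : Finset Site)
    (hu : UnderlineData l Θ γu Θt) :
    (contourOf Θ).card + (contourOf Θ \ (boxBdry l ∪ γu)).card ≤
      2 * (contourOf Θ \ boxBdry l).card :=
  stmt3_general l Θ γu Θt hu
end

section
/- Let γ be a non-crossing contour in Λ(l) with distinguished component γ̲ and boundary piece γ̄ = ∂Q(Λ(l)) ∩ ∂Q(Θ̃). Then |γ̄| ≤ |γ̲| and |γ̄ \ γ| ≤ |γ \ (∂Q(Λ(l)) ∪ γ̲)|. -/
open Finset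

/-! Argue line by line. Since `Θ̃` misses two adjacent sides of the box, it never contains both
end sites of a row or column of `Λ(l)`, so `γ̄` has at most one bond on each line; it therefore
suffices to match each bond of `γ̄` with a bond of `γ̲`, resp. of `γ \ (∂Q(Λ(l)) ∪ γ̲)`, on the
same line. Along the line, membership in `Θ̃` differs at the two ends, so it changes somewhere, at
a bond of `γ̲`. If the bond of `γ̄` is not in `γ`, its end site lies in `Θ̃ \ Θ` and the other
end does not; as every change of `Θ̃` inside the box is a bond of `γ̲ ⊆ γ` and thus a change of
`Θ`, membership in `Θ̃ \ Θ` can only change where `Θ` changes between two sites of `Θ̃`, which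
is a bond of `γ` lying neither on `∂Q(Λ(l))` nor in `γ̲`. -/

lemma exists_not_iff_add_one_of_not_iff {P : ℤ → Prop} {a b : ℤ} (hab : a ≤ b)
    (h : ¬(P a ↔ P b)) : ∃ t, a ≤ t ∧ t < b ∧ ¬(P t ↔ P (t + 1)) := by
  induction b, hab using Int.leInduction with
  | base => exact absurd Iff.rfl h
  | succ b hab ih =>
    by_cases hb : P a ↔ P b
    · exact ⟨b, hab, by omega, fun h' => h (hb.trans h')⟩
    · obtain ⟨t, hat, htb, ht⟩ := ih hb
      exact ⟨t, hat, by omega, ht⟩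

lemma exists_inner_not_iff_add_one {P Q : ℤ → Prop} {a b : ℤ} (hab : a ≤ b)
    (hQP : ∀ t, Q t → P t)
    (hPQ : ∀ t, a ≤ t → t < b → ¬(P t ↔ P (t + 1)) → ¬(Q t ↔ Q (t + 1)))
    (hchange : ¬(P a ∧ ¬Q a ↔ P b ∧ ¬Q b)) :
    ∃ t, a ≤ t ∧ t < b ∧ P t ∧ P (t + 1) ∧ ¬(Q t ↔ Q (t + 1)) := by
  by_contra! H
  -- otherwise `P ∧ ¬Q` would never change along `[a, b]`
  obtain ⟨t, hat, htb, ht⟩ :=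
    exists_not_iff_add_one_of_not_iff (P := fun t => P t ∧ ¬Q t) hab hchange
  have := hPQ t hat htb
  have := H t hat htb
  have := hQP t
  have := hQP (t + 1)
  tauto

-- `linePt true c` runs along the column `x = c`, `linePt false c` along the row `y = c`.
def linePt : Bool → ℤ → ℤ → Site
  | true, c, t => (c, t)
  | false, c, t => (t, c)

def lineBond (b : Bool) (c t : ℤ) : DBond := dualBond (linePt b c t) (linePt b c (t + 1))

lemma lineBond_inj {b b' : Bool} {c c' t t' : ℤ} (h : lineBond b c t = lineBond b' c' t') :
    b = b' ∧ c = c' ∧ t = t' := by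
  cases b <;> cases b' <;> simp [lineBond, linePt, dualBond] at h ⊢ <;> omega

lemma dualBond_comm {x y : Site} (hy : y ∈ nbrs x) : dualBond x y = dualBond y x := by
  simp only [nbrs, mem_insert, mem_singleton] at hy
  rcases hy with rfl | rfl | rfl | rfl <;> simp only [dualBond] <;> split_ifs <;>
    first | omega | simp

lemma mem_nbrs_iff_linePt {x y : Site} :
    y ∈ nbrs x ↔ ∃ b c t, (x = linePt b c t ∧ y = linePt b c (t + 1)) ∨
      (x = linePt b c (t + 1) ∧ y = linePt b c t) := by
  constructor
  · simp only [nbrs, mem_insert, mem_singleton]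
    rintro (rfl | rfl | rfl | rfl)
    · exact ⟨false, x.2, x.1, Or.inl ⟨rfl, rfl⟩⟩
    · exact ⟨false, x.2, x.1 - 1, Or.inr ⟨by simp [linePt], rfl⟩⟩
    · exact ⟨true, x.1, x.2, Or.inl ⟨rfl, rfl⟩⟩
    · exact ⟨true, x.1, x.2 - 1, Or.inr ⟨by simp [linePt], rfl⟩⟩
  · rintro ⟨b, c, t, ⟨rfl, rfl⟩ | ⟨rfl, rfl⟩⟩ <;> cases b <;> simp [nbrs, linePt]

lemma mem_lamBox_linePt {l : ℕ} {b : Bool} {c t : ℤ} :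
    linePt b c t ∈ lamBox l ↔
      (lamLo l ≤ c ∧ c ≤ lamHi l) ∧ lamLo l ≤ t ∧ t ≤ lamHi l := by
  cases b <;> simp only [lamBox, linePt, mem_Icc, Prod.mk_le_mk] <;> tauto

lemma lineBond_mem_biUnion_iff {X : Finset Site} {p : Site → Site → Prop}
    [∀ x, DecidablePred (p x)] {b : Bool} {c t : ℤ} :
    lineBond b c t ∈ X.biUnion (fun x => ((nbrs x).filter (p x)).image (dualBond x)) ↔
      (linePt b c t ∈ X ∧ p (linePt b c t) (linePt b c (t + 1))) ∨
        (linePt b c (t + 1) ∈ X ∧ p (linePt b c (t + 1)) (linePt b c t)) := by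
  have hnbr : linePt b c (t + 1) ∈ nbrs (linePt b c t) :=
    mem_nbrs_iff_linePt.mpr ⟨b, c, t, Or.inl ⟨rfl, rfl⟩⟩
  have hnbr' : linePt b c t ∈ nbrs (linePt b c (t + 1)) :=
    mem_nbrs_iff_linePt.mpr ⟨b, c, t, Or.inr ⟨rfl, rfl⟩⟩
  simp only [mem_biUnion, mem_filter, mem_image]
  constructor
  · rintro ⟨x, hx, y, ⟨hy, hp⟩, he⟩
    obtain ⟨b', c', t', ⟨rfl, rfl⟩ | ⟨rfl, rfl⟩⟩ := mem_nbrs_iff_linePt.mp hy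
    · obtain ⟨rfl, rfl, rfl⟩ := lineBond_inj he
      exact Or.inl ⟨hx, hp⟩
    · rw [dualBond_comm hy] at he
      obtain ⟨rfl, rfl, rfl⟩ := lineBond_inj he
      exact Or.inr ⟨hx, hp⟩
  · rintro (⟨hx, hp⟩ | ⟨hx, hp⟩)
    · exact ⟨_, hx, _, ⟨hnbr, hp⟩, rfl⟩
    · exact ⟨_, hx, _, ⟨hnbr', hp⟩, (dualBond_comm hnbr').trans rfl⟩

lemma exists_lineBond_of_mem_contourOf {S : Finset Site} {e : DBond} (he : e ∈ contourOf S) :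
    ∃ b c t, e = lineBond b c t := by
  simp only [contourOf, mem_biUnion, mem_filter, mem_image] at he
  obtain ⟨x, -, y, ⟨hy, -⟩, rfl⟩ := he
  obtain ⟨b, c, t, ⟨rfl, rfl⟩ | ⟨rfl, rfl⟩⟩ := mem_nbrs_iff_linePt.mp hy
  exacts [⟨b, c, t, rfl⟩, ⟨b, c, t, dualBond_comm hy⟩]

lemma lineBond_mem_contourOf {S : Finset Site} {b : Bool} {c t : ℤ} :
    lineBond b c t ∈ contourOf S ↔ ¬(linePt b c t ∈ S ↔ linePt b c (t + 1) ∈ S) := by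
  rw [contourOf, lineBond_mem_biUnion_iff]
  tauto

lemma lineBond_mem_interiorBdry {l : ℕ} {S : Finset Site} {b : Bool} {c t : ℤ} :
    lineBond b c t ∈ interiorBdry l S ↔
      (linePt b c t ∈ S ∧ linePt b c (t + 1) ∈ lamBox l ∧ linePt b c (t + 1) ∉ S) ∨
        (linePt b c (t + 1) ∈ S ∧ linePt b c t ∈ lamBox l ∧ linePt b c t ∉ S) :=
  lineBond_mem_biUnion_iff

section Underline

variable {l : ℕ} {Θ Θt : Finset Site}

lemma lineBond_mem_interiorBdry_of_not_iff {b : Bool} {c t : ℤ}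
    (hc : lamLo l ≤ c ∧ c ≤ lamHi l) (ht : lamLo l ≤ t) (ht' : t < lamHi l)
    (h : ¬(linePt b c t ∈ Θt ↔ linePt b c (t + 1) ∈ Θt)) :
    lineBond b c t ∈ interiorBdry l Θt := by
  have h0 : linePt b c t ∈ lamBox l := mem_lamBox_linePt.mpr ⟨hc, ht, ht'.le⟩
  have h1 : linePt b c (t + 1) ∈ lamBox l := mem_lamBox_linePt.mpr ⟨hc, by omega, by omega⟩
  rw [lineBond_mem_interiorBdry]
  tauto

lemma mem_gammaBar_lineBond (hΘt : Θt ⊆ lamBox l) {b : Bool} {c t : ℤ}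
    (he : lineBond b c t ∈ gammaBar l Θt) :
    (lamLo l ≤ c ∧ c ≤ lamHi l) ∧ ((t = lamLo l - 1 ∧ linePt b c (lamLo l) ∈ Θt) ∨
      (t = lamHi l ∧ linePt b c (lamHi l) ∈ Θt)) := by
  rw [gammaBar, mem_inter, boxBdry, lineBond_mem_contourOf, lineBond_mem_contourOf] at he
  obtain ⟨hbox, hΘt'⟩ := he
  by_cases ht : linePt b c t ∈ lamBox l
  · have ht1 : linePt b c (t + 1) ∉ lamBox l := by tauto
    have hmem : linePt b c t ∈ Θt := by
      by_contra h
      exact ht1 (hΘt (by tauto))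
    rw [mem_lamBox_linePt] at ht ht1
    have : t = lamHi l := by omega
    exact ⟨ht.1, Or.inr ⟨this, this ▸ hmem⟩⟩
  · have ht1 : linePt b c (t + 1) ∈ lamBox l := by tauto
    have hmem : linePt b c (t + 1) ∈ Θt := by
      by_contra h
      exact ht (hΘt (by tauto))
    rw [mem_lamBox_linePt] at ht ht1
    have : t + 1 = lamLo l := by omega
    exact ⟨ht1.1, Or.inl ⟨by omega, this ▸ hmem⟩⟩

lemma linePt_lamHi_notMem {i j : ℤ} (hΘt : Θt ⊆ lamBox l) (hi : i = 1 ∨ i = -1)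
    (hj : j = 2 ∨ j = -2) (hsi : ∀ x, sideSites l i x → x ∉ Θt)
    (hsj : ∀ x, sideSites l j x → x ∉ Θt) (b : Bool) (c : ℤ)
    (hlo : linePt b c (lamLo l) ∈ Θt) : linePt b c (lamHi l) ∉ Θt := by
  intro hhi
  cases b
  · rcases hi with rfl | rfl
    exacts [hsi _ ⟨hΘt hhi, by simp [linePt]⟩ hhi, hsi _ ⟨hΘt hlo, by simp [linePt]⟩ hlo]
  · rcases hj with rfl | rfl
    exacts [hsj _ ⟨hΘt hhi, by simp [linePt]⟩ hhi, hsj _ ⟨hΘt hlo, by simp [linePt]⟩ hlo]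

def OnSameLine (e e' : DBond) : Prop :=
  ∃ b c t t', e = lineBond b c t ∧ e' = lineBond b c t'

variable (hΘt : Θt ⊆ lamBox l)
  (hends : ∀ b c, linePt b c (lamLo l) ∈ Θt → linePt b c (lamHi l) ∉ Θt)
include hΘt hends

lemma card_le_of_forall_onSameLine {A B : Finset DBond} (hA : A ⊆ gammaBar l Θt)
    (h : ∀ e ∈ A, ∃ e' ∈ B, OnSameLine e e') : #A ≤ #B := by
  refine card_le_card_of_forall_subsingleton OnSameLine h fun _ _ => ?_
  rintro _ ⟨he₁, b, c, t₁, s, rfl, rfl⟩ _ ⟨he₂, b', c', t₂, s', rfl, hs⟩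
  obtain ⟨rfl, rfl, -⟩ := lineBond_inj hs
  obtain ⟨-, h₁⟩ := mem_gammaBar_lineBond hΘt (hA he₁)
  obtain ⟨-, h₂⟩ := mem_gammaBar_lineBond hΘt (hA he₂)
  have := hends b c
  congr 1
  rcases h₁ with ⟨rfl, h₁⟩ | ⟨rfl, h₁⟩ <;> rcases h₂ with ⟨h, h₂⟩ | ⟨h, h₂⟩ <;> tauto

lemma exists_mem_interiorBdry_onSameLine {e : DBond} (he : e ∈ gammaBar l Θt) :
    ∃ e' ∈ interiorBdry l Θt, OnSameLine e e' := by
  obtain ⟨b, c, t, rfl⟩ := exists_lineBond_of_mem_contourOf (mem_inter.mp he).2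
  obtain ⟨hc, hend⟩ := mem_gammaBar_lineBond hΘt he
  have hchange : ¬(linePt b c (lamLo l) ∈ Θt ↔ linePt b c (lamHi l) ∈ Θt) := by
    have := hends b c
    rcases hend with ⟨-, h⟩ | ⟨-, h⟩ <;> tauto
  obtain ⟨s, hs, hs', hchange⟩ :=
    exists_not_iff_add_one_of_not_iff (P := (linePt b c · ∈ Θt)) (by omega) hchange
  exact ⟨_, lineBond_mem_interiorBdry_of_not_iff hc hs hs' hchange, b, c, t, s, rfl, rfl⟩

lemma exists_mem_contourOf_sdiff_onSameLine (hΘ : Θ ⊆ Θt)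
    (hint : interiorBdry l Θt ⊆ contourOf Θ) {e : DBond} (he : e ∈ gammaBar l Θt \ contourOf Θ) :
    ∃ e' ∈ contourOf Θ \ (boxBdry l ∪ interiorBdry l Θt), OnSameLine e e' := by
  obtain ⟨heγ, heΘ⟩ := mem_sdiff.mp he
  obtain ⟨b, c, t, rfl⟩ := exists_lineBond_of_mem_contourOf (mem_inter.mp heγ).2
  obtain ⟨hc, hend⟩ := mem_gammaBar_lineBond hΘt heγ
  rw [lineBond_mem_contourOf, not_not] at heΘ
  have hout : ∀ s, s < lamLo l ∨ lamHi l < s → linePt b c s ∉ Θ := fun s hs h => by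
    have := mem_lamBox_linePt.mp (hΘt (hΘ h))
    omega
  have hchange : ¬(linePt b c (lamLo l) ∈ Θt ∧ linePt b c (lamLo l) ∉ Θ ↔
      linePt b c (lamHi l) ∈ Θt ∧ linePt b c (lamHi l) ∉ Θ) := by
    have := hends b c
    rcases hend with ⟨rfl, h⟩ | ⟨rfl, h⟩
    · have := hout (lamLo l - 1) (by omega)
      rw [sub_add_cancel] at heΘ
      tauto
    · have := hout (lamHi l + 1) (by omega)
      tauto
  obtain ⟨s, hs, hs', hPs, hPs', hQs⟩ :=
    exists_inner_not_iff_add_one (by omega : lamLo l ≤ lamHi l) (fun s h => hΘ h)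
      (fun s hs hs' h => lineBond_mem_contourOf.mp
        (hint (lineBond_mem_interiorBdry_of_not_iff hc hs hs' h))) hchange
  refine ⟨lineBond b c s, ?_, b, c, t, s, rfl, rfl⟩
  refine mem_sdiff.mpr ⟨lineBond_mem_contourOf.mpr hQs, ?_⟩
  simp [boxBdry, lineBond_mem_contourOf, lineBond_mem_interiorBdry, hPs, hPs', hΘt hPs, hΘt hPs']

end Underline

theorem stmt6_general (l : ℕ) (Θ : Finset Site) (γu : Finset DBond) (Θt : Finset Site)
    (hu : UnderlineData l Θ γu Θt) :
    (gammaBar l Θt).card ≤ γu.card ∧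
      (gammaBar l Θt \ contourOf Θ).card ≤ (contourOf Θ \ (boxBdry l ∪ γu)).card := by
  obtain ⟨hγu, -, -, hΘ, hΘt, -, -, rfl, i, j, hi, hj, -, -, hsi, hsj⟩ := hu
  have hends := linePt_lamHi_notMem hΘt hi hj hsi hsj
  exact ⟨card_le_of_forall_onSameLine hΘt hends Subset.rfl
      fun _ => exists_mem_interiorBdry_onSameLine hΘt hends,
    card_le_of_forall_onSameLine hΘt hends sdiff_subset
      fun _ => exists_mem_contourOf_sdiff_onSameLine hΘt hends hΘ (hγu.trans sdiff_subset)⟩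

/-- For a non-crossing contour `γ = ∂Q(Θ)` in `Λ(l)` with distinguished
component `γ̲ = γu` and boundary piece `γ̄ = ∂Q(Λ(l)) ∩ ∂Q(Θ̃)`:
`|γ̄| ≤ |γ̲|` and `|γ̄ \ γ| ≤ |γ \ (∂Q(Λ(l)) ∪ γ̲)|`. -/
theorem stmt6 (l : ℕ) (Θ : Finset Site) (hΘ : IsContourRegion Θ) (hin : Θ ⊆ lamBox l)
    (hnc : NonCrossing l (contourOf Θ)) (γu : Finset DBond) (Θt : Finset Site)
    (hu : UnderlineData l Θ γu Θt) :
    (gammaBar l Θt).card ≤ γu.card ∧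
      (gammaBar l Θt \ contourOf Θ).card ≤ (contourOf Θ \ (boxBdry l ∪ γu)).card :=
  stmt6_general l Θ γu Θt hu
end
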